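/- arXiv:2203.07447 — 4 statements merged into one kernel-verified Lean document; each statement's English description precedes it below -/
import Mathlib

section
/- For the Rössler system measured through h = z, the determinant of the observability matrix O_{z^3} built from z, L_f z, L_f^2 z equals -z², hence it vanishes exactly on the plane z = 0. -/
noncomputable section

def ros (a b c : ℝ) (p : Fin 3 → ℝ) : Fin 3 → ℝ :=
  ![-(p 1) - p 2, p 0 + a * p 1, b + p 2 * (p 0 - c)]

def lieD {n : ℕ} (f : (Fin n → ℝ) → Fin n → ℝ) (h : (Fin n → ℝ) → ℝ)
    (p : Fin n → ℝ) : ℝ :=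
  ∑ i, fderiv ℝ h p (Pi.single i 1) * f p i

def obsMat (f : (Fin 3 → ℝ) → Fin 3 → ℝ) (h : (Fin 3 → ℝ) → ℝ)
    (p : Fin 3 → ℝ) : Matrix (Fin 3) (Fin 3) ℝ :=
  Matrix.of fun i j =>
    fderiv ℝ (![h, lieD f h, lieD f (lieD f h)] i) p (Pi.single j 1)

lemma hproj (i : Fin 3) (p : Fin 3 → ℝ) :
    HasFDerivAt (fun q : Fin 3 → ℝ => q i)
      (ContinuousLinearMap.proj i : (Fin 3 → ℝ) →L[ℝ] ℝ) p :=
  (ContinuousLinearMap.proj i : (Fin 3 → ℝ) →L[ℝ] ℝ).hasFDerivAt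

lemma hL1 (b c : ℝ) (p : Fin 3 → ℝ) :
    HasFDerivAt (fun q : Fin 3 → ℝ => b + q 2 * (q 0 - c))
      (p 2 • (ContinuousLinearMap.proj 0 : (Fin 3 → ℝ) →L[ℝ] ℝ)
        + (p 0 - c) • ContinuousLinearMap.proj 2) p := by
  have := ((hproj 2 p).mul ((hproj 0 p).sub_const c)).const_add b
  simpa using this

lemma L1eq (a b c : ℝ) : lieD (ros a b c) (fun q => q 2)
    = fun p => b + p 2 * (p 0 - c) := by
  funext p
  have hf : fderiv ℝ (fun q : Fin 3 → ℝ => q 2) p = ContinuousLinearMap.proj 2 :=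
    (hproj 2 p).fderiv
  simp [lieD, hf, Fin.sum_univ_three, ros, Pi.single_apply]

lemma hL2 (b c : ℝ) (p : Fin 3 → ℝ) :
    HasFDerivAt (fun q : Fin 3 → ℝ =>
        q 2 * (-(q 1) - q 2) + (q 0 - c) * (b + q 2 * (q 0 - c)))
      ((p 2 • (-(ContinuousLinearMap.proj 1 : (Fin 3 → ℝ) →L[ℝ] ℝ)
          - ContinuousLinearMap.proj 2)
        + (-(p 1) - p 2) • ContinuousLinearMap.proj 2)
       + ((p 0 - c) • (p 2 • (ContinuousLinearMap.proj 0 : (Fin 3 → ℝ) →L[ℝ] ℝ)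
            + (p 0 - c) • ContinuousLinearMap.proj 2)
          + (b + p 2 * (p 0 - c)) • ContinuousLinearMap.proj 0)) p := by
  exact ((hproj 2 p).mul (((hproj 1 p).neg).sub (hproj 2 p))).add
    (((hproj 0 p).sub_const c).mul (hL1 b c p))

lemma L2eq (a b c : ℝ) :
    lieD (ros a b c) (lieD (ros a b c) (fun q => q 2))
      = fun p => p 2 * (-(p 1) - p 2) + (p 0 - c) * (b + p 2 * (p 0 - c)) := by
  funext p
  rw [lieD, L1eq a b c]
  have hf : fderiv ℝ (fun q : Fin 3 → ℝ => b + q 2 * (q 0 - c)) p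
      = p 2 • (ContinuousLinearMap.proj 0 : (Fin 3 → ℝ) →L[ℝ] ℝ)
        + (p 0 - c) • ContinuousLinearMap.proj 2 := (hL1 b c p).fderiv
  simp [hf, Fin.sum_univ_three, ros, Pi.single_apply]
  try ring

/-- Measuring z: Det O_{z³} = -z², vanishing exactly on the plane z = 0. -/
theorem roessler_obs_z (a b c : ℝ) :
    ∀ x y z : ℝ,
      (obsMat (ros a b c) (fun q => q 2) ![x, y, z]).det = -z ^ 2 ∧
      ((obsMat (ros a b c) (fun q => q 2) ![x, y, z]).det = 0 ↔ z = 0) := by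
  intro x y z
  set p : Fin 3 → ℝ := ![x, y, z] with hp
  have hf0 : fderiv ℝ (fun q : Fin 3 → ℝ => q 2) p
      = (ContinuousLinearMap.proj 2 : (Fin 3 → ℝ) →L[ℝ] ℝ) := (hproj 2 p).fderiv
  have hf1 : fderiv ℝ (lieD (ros a b c) (fun q => q 2)) p
      = p 2 • (ContinuousLinearMap.proj 0 : (Fin 3 → ℝ) →L[ℝ] ℝ)
        + (p 0 - c) • ContinuousLinearMap.proj 2 := by
    rw [L1eq a b c]; exact (hL1 b c p).fderiv
  have hf2 : fderiv ℝ (lieD (ros a b c) (lieD (ros a b c) (fun q => q 2))) p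
      = ((p 2 • (-(ContinuousLinearMap.proj 1 : (Fin 3 → ℝ) →L[ℝ] ℝ)
          - ContinuousLinearMap.proj 2)
        + (-(p 1) - p 2) • ContinuousLinearMap.proj 2)
       + ((p 0 - c) • (p 2 • (ContinuousLinearMap.proj 0 : (Fin 3 → ℝ) →L[ℝ] ℝ)
            + (p 0 - c) • ContinuousLinearMap.proj 2)
          + (b + p 2 * (p 0 - c)) • ContinuousLinearMap.proj 0)) := by
    rw [L2eq a b c]; exact (hL2 b c p).fderiv
  have hdet : (obsMat (ros a b c) (fun q => q 2) p).det = -z ^ 2 := by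
    have hpz : p 2 = z := by simp [hp]
    simp [obsMat, Matrix.det_fin_three, hf0, hf1, hf2, Pi.single_apply, hpz]
    ring
  refine ⟨hdet, ?_⟩
  rw [hdet]
  constructor
  · intro h; nlinarith [sq_nonneg z]
  · intro h; simp [h]
end
end

section
/- Let Φ_z : ℝ³ → ℝ³ be defined by Φ_z(x,y,z) = (z, b + z(x-c), ż·(x-c) + z·ẋ) with ż = b + z(x-c) and ẋ = -y-z (i.e. (z, ż, z̈) for the Rössler system). Then on the open set {(x,y,z) : z ≠ 0}, Φ_z is injective and its inverse satisfies x = (-b + cX₁ + X₂)/X₁ and y = -X₁ + (-bX₂ - X₁X₃ + X₂²)/X₁². -/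
/-!
Since `z ≠ 0`, the coordinates can be solved for one after another: `X₁ = z` gives `z`,
`X₂ = b + z (x - c)` gives `x` after dividing by `z`, and `X₃` is affine in `y` with
slope `-z`, so it gives `y`.
-/

noncomputable section

/-- Derivative coordinates of z for the Rössler system: Φ_z(x,y,z) = (z, ż, z̈). -/
def PhiZ (b c : ℝ) (p : ℝ × ℝ × ℝ) : ℝ × ℝ × ℝ :=
  (p.2.2, b + p.2.2 * (p.1 - c),
    (b + p.2.2 * (p.1 - c)) * (p.1 - c) + p.2.2 * (-p.2.1 - p.2.2))

def phiZInv (b c : ℝ) (X : ℝ × ℝ × ℝ) : ℝ × ℝ × ℝ :=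
  ((-b + c * X.1 + X.2.1) / X.1,
    -X.1 + (-b * X.2.1 - X.1 * X.2.2 + X.2.1 ^ 2) / X.1 ^ 2, X.1)

theorem phiZInv_phiZ (b c : ℝ) {p : ℝ × ℝ × ℝ} (hp : p.2.2 ≠ 0) :
    phiZInv b c (PhiZ b c p) = p := by
  obtain ⟨x, y, z⟩ := p
  dsimp only at hp
  simp only [phiZInv, PhiZ, Prod.mk.injEq, and_true]
  constructor
  · field_simp
    ring
  · field_simp
    ring

theorem leftInvOn_phiZInv (b c : ℝ) :
    Set.LeftInvOn (phiZInv b c) (PhiZ b c) {p | p.2.2 ≠ 0} :=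
  fun _ hp => phiZInv_phiZ b c hp

theorem phiZ_injOn (b c : ℝ) :
    Set.InjOn (PhiZ b c) {p : ℝ × ℝ × ℝ | p.2.2 ≠ 0} ∧
    ∀ x y z : ℝ, z ≠ 0 →
      (let X := PhiZ b c (x, y, z)
       x = (-b + c * X.1 + X.2.1) / X.1 ∧
       y = -X.1 + (-b * X.2.1 - X.1 * X.2.2 + X.2.1 ^ 2) / X.1 ^ 2) := by
  refine ⟨(leftInvOn_phiZInv b c).injOn, fun x y z hz => ?_⟩
  have h := phiZInv_phiZ b c (p := (x, y, z)) hz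
  simp only [phiZInv, Prod.mk.injEq] at h
  exact ⟨h.1.symm, h.2.1.symm⟩
end
end

section
/- For the unidirectionally y-coupled dyad of Rössler systems, the map Ψ : ℝ⁶ → ℝ⁶ sending the full state (x₁,y₁,z₁,x₂,y₂,z₂) to (x₂, ẋ₂, y₂, ẏ₂, ÿ₂, y⃛₂) (derivatives along the coupled flow) has Jacobian determinant equal to -ρ³ at every point; in particular, for ρ ≠ 0 the dyad is globally observable from the measurements (x₂, y₂). -/
noncomputable section

/-- The unidirectionally y-coupled Rössler dyad vector field on ℝ⁶.
Coordinates: (x₁,y₁,z₁,x₂,y₂,z₂) = (p 0, …, p 5). -/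
def dyadF (a₁ a₂ b c ρ : ℝ) (p : Fin 6 → ℝ) : Fin 6 → ℝ :=
  ![-(p 1) - p 2, p 0 + a₁ * p 1, b + p 2 * (p 0 - c),
    -(p 4) - p 5, p 3 + a₂ * p 4 + ρ * (p 1 - p 4), b + p 5 * (p 3 - c)]

/-- Jacobian matrix of a family of n scalar functions on ℝⁿ. -/
def jacM {n : ℕ} (Ψ : Fin n → ((Fin n → ℝ) → ℝ)) (p : Fin n → ℝ) :
    Matrix (Fin n) (Fin n) ℝ :=
  Matrix.of fun i j => fderiv ℝ (Ψ i) p (Pi.single j 1)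

open Matrix

/-! Along the dyad, `ẋ₂`, `ẏ₂` and `ÿ₂` are linear forms in the state: the Rössler nonlinearity
`z (x - c)` enters only through `ż₂`, which first appears in `y⃛₂`. Hence the first five rows of the
Jacobian are constant, and none of them involves `z₁`. Expanding along the `z₁`-column, the
determinant is `∂y⃛₂/∂z₁ = -ρ` times a constant minor equal to `ρ²`. -/

section LieDerivative

variable {n : ℕ}

theorem lieD_eq_fderiv_apply (f : (Fin n → ℝ) → Fin n → ℝ) (h : (Fin n → ℝ) → ℝ)
    (p : Fin n → ℝ) : lieD f h p = fderiv ℝ h p (f p) := by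
  conv_rhs => rw [← Finset.univ_sum_single (f p)]
  simp only [lieD, map_sum]
  refine Finset.sum_congr rfl fun i _ => ?_
  have hsingle : Pi.single i (f p i) = f p i • Pi.single i (1 : ℝ) := by
    rw [← Pi.single_smul', smul_eq_mul, mul_one]
  rw [hsingle, map_smul, smul_eq_mul, mul_comm]

theorem coord_eq_single_dotProduct {ι : Type*} [Fintype ι] [DecidableEq ι] (i : ι) :
    (fun p : ι → ℝ => p i) = (Pi.single i 1 ⬝ᵥ ·) := by
  funext p
  rw [single_dotProduct, one_mul]

theorem fderiv_dotProduct_apply {ι : Type*} [Fintype ι] [DecidableEq ι] (w p v : ι → ℝ) :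
    fderiv ℝ (w ⬝ᵥ ·) p v = w ⬝ᵥ v := by
  have hℓ : HasFDerivAt (w ⬝ᵥ ·) (LinearMap.toContinuousLinearMap (dotProductEquiv ℝ ι w)) p :=
    (LinearMap.toContinuousLinearMap (dotProductEquiv ℝ ι w)).hasFDerivAt
  simp [hℓ.fderiv]

theorem lieD_dotProduct (f : (Fin n → ℝ) → Fin n → ℝ) (w : Fin n → ℝ) :
    lieD f (w ⬝ᵥ ·) = fun p => w ⬝ᵥ f p := by
  funext p
  rw [lieD_eq_fderiv_apply, fderiv_dotProduct_apply]

theorem jacM_row_eq_of_eq_dotProduct {Ψ : Fin n → (Fin n → ℝ) → ℝ} {i : Fin n}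
    {w : Fin n → ℝ} (hΨ : Ψ i = (w ⬝ᵥ ·)) (p : Fin n → ℝ) : jacM Ψ p i = w := by
  funext j
  simp [jacM, hΨ, fderiv_dotProduct_apply]

theorem fderiv_apply_single_eq_of_line {h : (Fin n → ℝ) → ℝ} {p : Fin n → ℝ} {j : Fin n}
    {c : ℝ} (hh : DifferentiableAt ℝ h p)
    (hline : ∀ t : ℝ, h (p + t • Pi.single j 1) = h p + c * t) :
    fderiv ℝ h p (Pi.single j 1) = c := by
  rw [← hh.lineDeriv_eq_fderiv, lineDeriv, funext hline]
  simp

end LieDerivative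

section Dyad

variable (a₁ a₂ b c ρ : ℝ)

/-- The observation map `(x₂, ẋ₂, y₂, ẏ₂, ÿ₂, y⃛₂)`. -/
def x₂y₂Observables : Fin 6 → (Fin 6 → ℝ) → ℝ :=
  ![fun p => p 3, lieD (dyadF a₁ a₂ b c ρ) (fun p => p 3),
    fun p => p 4, lieD (dyadF a₁ a₂ b c ρ) (fun p => p 4),
    lieD (dyadF a₁ a₂ b c ρ) (lieD (dyadF a₁ a₂ b c ρ) (fun p => p 4)),
    lieD (dyadF a₁ a₂ b c ρ)
      (lieD (dyadF a₁ a₂ b c ρ) (lieD (dyadF a₁ a₂ b c ρ) (fun p => p 4)))]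

/-! The coefficient vectors of the linear forms `ẋ₂`, `ẏ₂` and `ÿ₂`. -/

def dx₂ : Fin 6 → ℝ := ![0, 0, 0, 0, -1, -1]

def dy₂ : Fin 6 → ℝ := ![0, ρ, 0, 1, a₂ - ρ, 0]

def ddy₂ : Fin 6 → ℝ := ![ρ, ρ * (a₁ + a₂ - ρ), 0, a₂ - ρ, (a₂ - ρ) ^ 2 - 1, -1]

theorem lieD_dyadF_x₂ : lieD (dyadF a₁ a₂ b c ρ) (fun p => p 3) = (dx₂ ⬝ᵥ ·) := by
  rw [coord_eq_single_dotProduct, lieD_dotProduct]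
  funext p
  simp [dyadF, dx₂, dotProduct, Fin.sum_univ_six]
  ring

theorem lieD_dyadF_y₂ : lieD (dyadF a₁ a₂ b c ρ) (fun p => p 4) = (dy₂ a₂ ρ ⬝ᵥ ·) := by
  rw [coord_eq_single_dotProduct, lieD_dotProduct]
  funext p
  simp [dyadF, dy₂, dotProduct, Fin.sum_univ_six]
  ring

theorem lieD_dyadF_dy₂ :
    lieD (dyadF a₁ a₂ b c ρ) (dy₂ a₂ ρ ⬝ᵥ ·) = (ddy₂ a₁ a₂ ρ ⬝ᵥ ·) := by
  rw [lieD_dotProduct]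
  funext p
  simp [dyadF, dy₂, ddy₂, dotProduct, Fin.sum_univ_six]
  ring

theorem fderiv_lieD_dyadF_ddy₂_apply_z₁ (p : Fin 6 → ℝ) :
    fderiv ℝ (lieD (dyadF a₁ a₂ b c ρ) (ddy₂ a₁ a₂ ρ ⬝ᵥ ·)) p (Pi.single 2 1) = -ρ := by
  rw [lieD_dotProduct]
  apply fderiv_apply_single_eq_of_line
  · simp only [dyadF, ddy₂, dotProduct, Fin.sum_univ_six, cons_val_zero, cons_val_one, cons_val]
    fun_prop
  · intro t
    simp [dyadF, ddy₂, dotProduct, Fin.sum_univ_six]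
    ring

theorem det_eq_of_rows (M : Matrix (Fin 6) (Fin 6) ℝ) (h₀ : M 0 = Pi.single 3 1)
    (h₁ : M 1 = dx₂) (h₂ : M 2 = Pi.single 4 1) (h₃ : M 3 = dy₂ a₂ ρ)
    (h₄ : M 4 = ddy₂ a₁ a₂ ρ) : M.det = ρ ^ 2 * M 5 2 := by
  have hM : M = Matrix.of ![M 0, M 1, M 2, M 3, M 4, M 5] := by
    ext i j
    fin_cases i <;> rfl
  rw [hM, h₀, h₁, h₂, h₃, h₄]
  simp [det_succ_row_zero, Fin.sum_univ_succ, dx₂, dy₂, ddy₂, Fin.succAbove]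
  ring

theorem det_jacM_x₂y₂Observables (p : Fin 6 → ℝ) :
    (jacM (x₂y₂Observables a₁ a₂ b c ρ) p).det = -ρ ^ 3 := by
  have hΨ : x₂y₂Observables a₁ a₂ b c ρ = ![(Pi.single 3 1 ⬝ᵥ ·), (dx₂ ⬝ᵥ ·),
      (Pi.single 4 1 ⬝ᵥ ·), (dy₂ a₂ ρ ⬝ᵥ ·), (ddy₂ a₁ a₂ ρ ⬝ᵥ ·),
      lieD (dyadF a₁ a₂ b c ρ) (ddy₂ a₁ a₂ ρ ⬝ᵥ ·)] := by
    rw [x₂y₂Observables, lieD_dyadF_x₂, lieD_dyadF_y₂, lieD_dyadF_dy₂,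
      coord_eq_single_dotProduct 3, coord_eq_single_dotProduct 4]
  have hz₁ : jacM (x₂y₂Observables a₁ a₂ b c ρ) p 5 2 = -ρ := by
    rw [hΨ]
    exact fderiv_lieD_dyadF_ddy₂_apply_z₁ a₁ a₂ b c ρ p
  rw [det_eq_of_rows a₁ a₂ ρ _ .., hz₁]
  · ring
  all_goals exact jacM_row_eq_of_eq_dotProduct (by rw [hΨ]; rfl) p

end Dyad

/-- The map (x₂, ẋ₂, y₂, ẏ₂, ÿ₂, y⃛₂) has Jacobian determinant -ρ³ everywhere;
for ρ ≠ 0 the dyad is globally observable from (x₂, y₂). -/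
theorem dyad_obs_x2y2 (a₁ a₂ b c ρ : ℝ) :
    (∀ p : Fin 6 → ℝ,
      (jacM ![fun p => p 3, lieD (dyadF a₁ a₂ b c ρ) (fun p => p 3),
              fun p => p 4, lieD (dyadF a₁ a₂ b c ρ) (fun p => p 4),
              lieD (dyadF a₁ a₂ b c ρ) (lieD (dyadF a₁ a₂ b c ρ) (fun p => p 4)),
              lieD (dyadF a₁ a₂ b c ρ)
                (lieD (dyadF a₁ a₂ b c ρ) (lieD (dyadF a₁ a₂ b c ρ) (fun p => p 4)))]
        p).det = -ρ ^ 3) ∧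
    (ρ ≠ 0 → ∀ p : Fin 6 → ℝ,
      IsUnit (jacM ![fun p => p 3, lieD (dyadF a₁ a₂ b c ρ) (fun p => p 3),
              fun p => p 4, lieD (dyadF a₁ a₂ b c ρ) (fun p => p 4),
              lieD (dyadF a₁ a₂ b c ρ) (lieD (dyadF a₁ a₂ b c ρ) (fun p => p 4)),
              lieD (dyadF a₁ a₂ b c ρ)
                (lieD (dyadF a₁ a₂ b c ρ) (lieD (dyadF a₁ a₂ b c ρ) (fun p => p 4)))]
        p)) := by
  have hdet := det_jacM_x₂y₂Observables a₁ a₂ b c ρ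
  refine ⟨hdet, fun hρ p => ?_⟩
  change IsUnit (jacM (x₂y₂Observables a₁ a₂ b c ρ) p)
  rw [isUnit_iff_isUnit_det, hdet p, isUnit_iff_ne_zero]
  simpa using hρ
end
end

section
/- Consider a triad of Rössler systems with coupling structure 1 → 2 ← 3 through variable y (node 2 receives ρ(y₁ - y₂) + ρ(y₃ - y₂)). The map from the 9-dimensional state to the 9 reconstructed coordinates (x₂, ẋ₂, y₂, ẏ₂, ÿ₂, y⃛₂, y₃, ẏ₃, ÿ₃) has everywhere-nonvanishing Jacobian determinant when ρ ≠ 0; concretely, its determinant is a nonzero constant multiple of a power of ρ, so measuring (x₂, y₂, y₃) gives global observability of the triad. -/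
noncomputable section

/-- Triad of Rössler systems 1 → 2 ← 3, coupled through y, on ℝ⁹.
Coordinates: node 1 = (p 0, p 1, p 2), node 2 = (p 3, p 4, p 5),
node 3 = (p 6, p 7, p 8). -/
def triadF (a₁ a₂ a₃ b c ρ : ℝ) (p : Fin 9 → ℝ) : Fin 9 → ℝ :=
  ![-(p 1) - p 2, p 0 + a₁ * p 1, b + p 2 * (p 0 - c),
    -(p 4) - p 5, p 3 + a₂ * p 4 + ρ * (p 1 - p 4) + ρ * (p 7 - p 4),
    b + p 5 * (p 3 - c),
    -(p 7) - p 8, p 6 + a₃ * p 7, b + p 8 * (p 6 - c)]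

@[simp] lemma cv1_1 {α : Type*} (x : α) (u : Fin 1 → α) : Matrix.vecCons x u 1 = u 0 := rfl
@[simp] lemma cv2_1 {α : Type*} (x : α) (u : Fin 2 → α) : Matrix.vecCons x u 1 = u 0 := rfl
@[simp] lemma cv2_2 {α : Type*} (x : α) (u : Fin 2 → α) : Matrix.vecCons x u 2 = u 1 := rfl
@[simp] lemma cv3_1 {α : Type*} (x : α) (u : Fin 3 → α) : Matrix.vecCons x u 1 = u 0 := rfl
@[simp] lemma cv3_2 {α : Type*} (x : α) (u : Fin 3 → α) : Matrix.vecCons x u 2 = u 1 := rfl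
@[simp] lemma cv3_3 {α : Type*} (x : α) (u : Fin 3 → α) : Matrix.vecCons x u 3 = u 2 := rfl
@[simp] lemma cv4_1 {α : Type*} (x : α) (u : Fin 4 → α) : Matrix.vecCons x u 1 = u 0 := rfl
@[simp] lemma cv4_2 {α : Type*} (x : α) (u : Fin 4 → α) : Matrix.vecCons x u 2 = u 1 := rfl
@[simp] lemma cv4_3 {α : Type*} (x : α) (u : Fin 4 → α) : Matrix.vecCons x u 3 = u 2 := rfl
@[simp] lemma cv4_4 {α : Type*} (x : α) (u : Fin 4 → α) : Matrix.vecCons x u 4 = u 3 := rfl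
@[simp] lemma cv5_1 {α : Type*} (x : α) (u : Fin 5 → α) : Matrix.vecCons x u 1 = u 0 := rfl
@[simp] lemma cv5_2 {α : Type*} (x : α) (u : Fin 5 → α) : Matrix.vecCons x u 2 = u 1 := rfl
@[simp] lemma cv5_3 {α : Type*} (x : α) (u : Fin 5 → α) : Matrix.vecCons x u 3 = u 2 := rfl
@[simp] lemma cv5_4 {α : Type*} (x : α) (u : Fin 5 → α) : Matrix.vecCons x u 4 = u 3 := rfl
@[simp] lemma cv5_5 {α : Type*} (x : α) (u : Fin 5 → α) : Matrix.vecCons x u 5 = u 4 := rfl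
@[simp] lemma cv6_1 {α : Type*} (x : α) (u : Fin 6 → α) : Matrix.vecCons x u 1 = u 0 := rfl
@[simp] lemma cv6_2 {α : Type*} (x : α) (u : Fin 6 → α) : Matrix.vecCons x u 2 = u 1 := rfl
@[simp] lemma cv6_3 {α : Type*} (x : α) (u : Fin 6 → α) : Matrix.vecCons x u 3 = u 2 := rfl
@[simp] lemma cv6_4 {α : Type*} (x : α) (u : Fin 6 → α) : Matrix.vecCons x u 4 = u 3 := rfl
@[simp] lemma cv6_5 {α : Type*} (x : α) (u : Fin 6 → α) : Matrix.vecCons x u 5 = u 4 := rfl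
@[simp] lemma cv6_6 {α : Type*} (x : α) (u : Fin 6 → α) : Matrix.vecCons x u 6 = u 5 := rfl
@[simp] lemma cv7_1 {α : Type*} (x : α) (u : Fin 7 → α) : Matrix.vecCons x u 1 = u 0 := rfl
@[simp] lemma cv7_2 {α : Type*} (x : α) (u : Fin 7 → α) : Matrix.vecCons x u 2 = u 1 := rfl
@[simp] lemma cv7_3 {α : Type*} (x : α) (u : Fin 7 → α) : Matrix.vecCons x u 3 = u 2 := rfl
@[simp] lemma cv7_4 {α : Type*} (x : α) (u : Fin 7 → α) : Matrix.vecCons x u 4 = u 3 := rfl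
@[simp] lemma cv7_5 {α : Type*} (x : α) (u : Fin 7 → α) : Matrix.vecCons x u 5 = u 4 := rfl
@[simp] lemma cv7_6 {α : Type*} (x : α) (u : Fin 7 → α) : Matrix.vecCons x u 6 = u 5 := rfl
@[simp] lemma cv7_7 {α : Type*} (x : α) (u : Fin 7 → α) : Matrix.vecCons x u 7 = u 6 := rfl
@[simp] lemma cv8_1 {α : Type*} (x : α) (u : Fin 8 → α) : Matrix.vecCons x u 1 = u 0 := rfl
@[simp] lemma cv8_2 {α : Type*} (x : α) (u : Fin 8 → α) : Matrix.vecCons x u 2 = u 1 := rfl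
@[simp] lemma cv8_3 {α : Type*} (x : α) (u : Fin 8 → α) : Matrix.vecCons x u 3 = u 2 := rfl
@[simp] lemma cv8_4 {α : Type*} (x : α) (u : Fin 8 → α) : Matrix.vecCons x u 4 = u 3 := rfl
@[simp] lemma cv8_5 {α : Type*} (x : α) (u : Fin 8 → α) : Matrix.vecCons x u 5 = u 4 := rfl
@[simp] lemma cv8_6 {α : Type*} (x : α) (u : Fin 8 → α) : Matrix.vecCons x u 6 = u 5 := rfl
@[simp] lemma cv8_7 {α : Type*} (x : α) (u : Fin 8 → α) : Matrix.vecCons x u 7 = u 6 := rfl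
@[simp] lemma cv8_8 {α : Type*} (x : α) (u : Fin 8 → α) : Matrix.vecCons x u 8 = u 7 := rfl

section Aux
variable (a₁ a₂ a₃ b c ρ : ℝ)

abbrev R9 := Fin 9 → ℝ

def pr (i : Fin 9) : R9 →L[ℝ] ℝ := ContinuousLinearMap.proj i

lemma hpr (i : Fin 9) (p : R9) : HasFDerivAt (fun q : R9 => q i) (pr i) p :=
  (pr i).hasFDerivAt

lemma lieD_eq' {n : ℕ} (f : (Fin n → ℝ) → Fin n → ℝ) (h : (Fin n → ℝ) → ℝ)
    (L : (Fin n → ℝ) →L[ℝ] ℝ) (p : Fin n → ℝ) (hL : HasFDerivAt h L p) :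
    lieD f h p = ∑ i, L (Pi.single i 1) * f p i := by
  unfold lieD; rw [hL.fderiv]

lemma hg1 (p : R9) : HasFDerivAt (fun q : R9 => -(q 4) - q 5) (-pr 4 - pr 5) p :=
  ((hpr 4 p).neg).sub (hpr 5 p)

lemma hg3 (p : R9) : HasFDerivAt
    (fun q : R9 => ρ * q 1 + q 3 + (a₂ - 2*ρ) * q 4 + ρ * q 7)
    (((ρ • pr 1 + pr 3) + (a₂ - 2*ρ) • pr 4) + ρ • pr 7) p :=
  ((((hpr 1 p).const_mul ρ).add (hpr 3 p)).add ((hpr 4 p).const_mul (a₂ - 2*ρ))).add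
    ((hpr 7 p).const_mul ρ)

lemma hg4 (p : R9) : HasFDerivAt
    (fun q : R9 => ρ * q 0 + (ρ*(a₁+(a₂ - 2*ρ))) * q 1 + (a₂ - 2*ρ) * q 3 + ((a₂ - 2*ρ)^2-1) * q 4
      - q 5 + ρ * q 6 + (ρ*(a₃+(a₂ - 2*ρ))) * q 7)
    ((((((ρ • pr 0 + (ρ*(a₁+(a₂ - 2*ρ))) • pr 1) + (a₂ - 2*ρ) • pr 3 + ((a₂ - 2*ρ)^2-1) • pr 4)
      - pr 5) + ρ • pr 6) + (ρ*(a₃+(a₂ - 2*ρ))) • pr 7)) p := by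
  exact (((((((hpr 0 p).const_mul ρ).add ((hpr 1 p).const_mul (ρ*(a₁+(a₂ - 2*ρ))))).add
    ((hpr 3 p).const_mul (a₂ - 2*ρ))).add ((hpr 4 p).const_mul ((a₂ - 2*ρ)^2-1))).sub (hpr 5 p)).add
    ((hpr 6 p).const_mul ρ)).add ((hpr 7 p).const_mul (ρ*(a₃+(a₂ - 2*ρ))))

lemma hg5 (p : R9) : HasFDerivAt
    (fun q : R9 => -b + (ρ*(a₁+(a₂ - 2*ρ))) * q 0 + (-ρ + ρ*(a₁+(a₂ - 2*ρ))*a₁ + ((a₂ - 2*ρ)^2-1)*ρ) * q 1 + (-ρ) * q 2 + ((a₂ - 2*ρ)^2-1) * q 3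
      + (-(a₂ - 2*ρ) + ((a₂ - 2*ρ)^2-1)*(a₂ - 2*ρ)) * q 4 + (-(a₂ - 2*ρ) + c) * q 5 + (ρ*(a₃+(a₂ - 2*ρ))) * q 6 + (((a₂ - 2*ρ)^2-1)*ρ - ρ + ρ*(a₃+(a₂ - 2*ρ))*a₃) * q 7 + (-ρ) * q 8
      - q 5 * q 3)
    (((((((((((0 : R9 →L[ℝ] ℝ) + (ρ*(a₁+(a₂ - 2*ρ))) • pr 0) + (-ρ + ρ*(a₁+(a₂ - 2*ρ))*a₁ + ((a₂ - 2*ρ)^2-1)*ρ) • pr 1) + (-ρ) • pr 2)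
      + ((a₂ - 2*ρ)^2-1) • pr 3) + (-(a₂ - 2*ρ) + ((a₂ - 2*ρ)^2-1)*(a₂ - 2*ρ)) • pr 4) + (-(a₂ - 2*ρ) + c) • pr 5) + (ρ*(a₃+(a₂ - 2*ρ))) • pr 6)
      + (((a₂ - 2*ρ)^2-1)*ρ - ρ + ρ*(a₃+(a₂ - 2*ρ))*a₃) • pr 7) + (-ρ) • pr 8)
      - ((p 5) • pr 3 + (p 3) • pr 5)) p := by
  exact ((((((((((hasFDerivAt_const (-b) p).add ((hpr 0 p).const_mul (ρ*(a₁+(a₂ - 2*ρ))))).add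
    ((hpr 1 p).const_mul (-ρ + ρ*(a₁+(a₂ - 2*ρ))*a₁ + ((a₂ - 2*ρ)^2-1)*ρ))).add ((hpr 2 p).const_mul (-ρ))).add
    ((hpr 3 p).const_mul ((a₂ - 2*ρ)^2-1))).add ((hpr 4 p).const_mul (-(a₂ - 2*ρ) + ((a₂ - 2*ρ)^2-1)*(a₂ - 2*ρ)))).add
    ((hpr 5 p).const_mul (-(a₂ - 2*ρ) + c))).add ((hpr 6 p).const_mul (ρ*(a₃+(a₂ - 2*ρ))))).add
    ((hpr 7 p).const_mul (((a₂ - 2*ρ)^2-1)*ρ - ρ + ρ*(a₃+(a₂ - 2*ρ))*a₃))).add ((hpr 8 p).const_mul (-ρ))).sub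
    ((hpr 5 p).mul (hpr 3 p))

lemma hg7 (p : R9) : HasFDerivAt (fun q : R9 => q 6 + a₃ * q 7)
    (pr 6 + a₃ • pr 7) p :=
  (hpr 6 p).add ((hpr 7 p).const_mul a₃)

lemma hg8 (p : R9) : HasFDerivAt (fun q : R9 => a₃ * q 6 + (a₃^2-1) * q 7 - q 8)
    ((a₃ • pr 6 + (a₃^2-1) • pr 7) - pr 8) p :=
  (((hpr 6 p).const_mul a₃).add ((hpr 7 p).const_mul (a₃^2-1))).sub (hpr 8 p)

lemma psi1_eq : lieD (triadF a₁ a₂ a₃ b c ρ) (fun p => p 3)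
    = fun p : R9 => -(p 4) - p 5 := by
  funext p
  rw [lieD_eq' _ _ _ p (hpr 3 p)]
  simp (config := { decide := true }) [Fin.sum_univ_succ, pr, Pi.single_apply, triadF]

lemma psi3_eq : lieD (triadF a₁ a₂ a₃ b c ρ) (fun p => p 4)
    = fun p : R9 => ρ * p 1 + p 3 + (a₂ - 2*ρ) * p 4 + ρ * p 7 := by
  funext p
  rw [lieD_eq' _ _ _ p (hpr 4 p)]
  simp (config := { decide := true }) [Fin.sum_univ_succ, pr, Pi.single_apply, triadF]
  ring

lemma psi4_eq : lieD (triadF a₁ a₂ a₃ b c ρ)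
      (lieD (triadF a₁ a₂ a₃ b c ρ) (fun p => p 4))
    = fun p : R9 => ρ * p 0 + (ρ*(a₁+(a₂ - 2*ρ))) * p 1 + (a₂ - 2*ρ) * p 3 + ((a₂ - 2*ρ)^2-1) * p 4
      - p 5 + ρ * p 6 + (ρ*(a₃+(a₂ - 2*ρ))) * p 7 := by
  rw [psi3_eq]
  funext p
  rw [lieD_eq' _ _ _ p (hg3 a₂ ρ p)]
  simp (config := { decide := true }) [Fin.sum_univ_succ, pr, Pi.single_apply, triadF]
  ring

lemma psi5_eq : lieD (triadF a₁ a₂ a₃ b c ρ) (lieD (triadF a₁ a₂ a₃ b c ρ)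
      (lieD (triadF a₁ a₂ a₃ b c ρ) (fun p => p 4)))
    = fun p : R9 => -b + (ρ*(a₁+(a₂ - 2*ρ))) * p 0 + (-ρ + ρ*(a₁+(a₂ - 2*ρ))*a₁ + ((a₂ - 2*ρ)^2-1)*ρ) * p 1 + (-ρ) * p 2 + ((a₂ - 2*ρ)^2-1) * p 3
      + (-(a₂ - 2*ρ) + ((a₂ - 2*ρ)^2-1)*(a₂ - 2*ρ)) * p 4 + (-(a₂ - 2*ρ) + c) * p 5 + (ρ*(a₃+(a₂ - 2*ρ))) * p 6 + (((a₂ - 2*ρ)^2-1)*ρ - ρ + ρ*(a₃+(a₂ - 2*ρ))*a₃) * p 7 + (-ρ) * p 8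
      - p 5 * p 3 := by
  rw [psi4_eq]
  funext p
  rw [lieD_eq' _ _ _ p (hg4 a₁ a₂ a₃ ρ p)]
  simp (config := { decide := true }) [Fin.sum_univ_succ, pr, Pi.single_apply, triadF]
  ring

lemma psi7_eq : lieD (triadF a₁ a₂ a₃ b c ρ) (fun p => p 7)
    = fun p : R9 => p 6 + a₃ * p 7 := by
  funext p
  rw [lieD_eq' _ _ _ p (hpr 7 p)]
  simp (config := { decide := true }) [Fin.sum_univ_succ, pr, Pi.single_apply, triadF]

lemma psi8_eq : lieD (triadF a₁ a₂ a₃ b c ρ)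
      (lieD (triadF a₁ a₂ a₃ b c ρ) (fun p => p 7))
    = fun p : R9 => a₃ * p 6 + (a₃^2-1) * p 7 - p 8 := by
  rw [psi7_eq]
  funext p
  rw [lieD_eq' _ _ _ p (hg7 a₃ p)]
  simp (config := { decide := true }) [Fin.sum_univ_succ, pr, Pi.single_apply, triadF]
  ring

end Aux

lemma expand_one {n : ℕ} (A : Matrix (Fin (n+2)) (Fin (n+2)) ℝ) (i j : Fin (n+2))
    (B : Matrix (Fin (n+1)) (Fin (n+1)) ℝ)
    (hB : A.submatrix i.succAbove j.succAbove = B)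
    (h0 : ∀ j', j' ≠ j → A i j' = 0) :
    A.det = (-1)^((i:ℕ)+(j:ℕ)) * A i j * B.det := by
  rw [Matrix.det_succ_row A i, Finset.sum_eq_single j]
  · rw [hB]
  · intro b _ hb; rw [h0 b hb]; ring
  · intro h; exact absurd (Finset.mem_univ j) h

lemma det9 (b1 b2 b3 b4 c0 c1 c3 c4 c5 c6 c7 d0 d1 d2 d3 d4 d5 d6 d7 d8 e0 e1 f0 f1 f2 : ℝ) :
    (Matrix.of ![![0, 0, 0, 1, 0, 0, 0, 0, 0], ![0, 0, 0, 0, -1, -1, 0, 0, 0], ![0, 0, 0, 0, 1, 0, 0, 0, 0], ![0, b1, 0, b2, b3, 0, 0, b4, 0], ![c0, c1, 0, c3, c4, c5, c6, c7, 0], ![d0, d1, d2, d3, d4, d5, d6, d7, d8], ![0, 0, 0, 0, 0, 0, 0, 1, 0], ![0, 0, 0, 0, 0, 0, e0, e1, 0], ![0, 0, 0, 0, 0, 0, f0, f1, f2]]).det = -(b1*c0*d2*e0*f2) := by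
  rw [expand_one _ 0 3 (Matrix.of ![![0, 0, 0, -1, -1, 0, 0, 0], ![0, 0, 0, 1, 0, 0, 0, 0], ![0, b1, 0, b3, 0, 0, b4, 0], ![c0, c1, 0, c4, c5, c6, c7, 0], ![d0, d1, d2, d4, d5, d6, d7, d8], ![0, 0, 0, 0, 0, 0, 1, 0], ![0, 0, 0, 0, 0, e0, e1, 0], ![0, 0, 0, 0, 0, f0, f1, f2]])
      (by ext a b; fin_cases a <;> fin_cases b <;> rfl)
      (by intro j' hj'; fin_cases j' <;> simp_all)]
  rw [expand_one _ 1 3 (Matrix.of ![![0, 0, 0, -1, 0, 0, 0], ![0, b1, 0, 0, 0, b4, 0], ![c0, c1, 0, c5, c6, c7, 0], ![d0, d1, d2, d5, d6, d7, d8], ![0, 0, 0, 0, 0, 1, 0], ![0, 0, 0, 0, e0, e1, 0], ![0, 0, 0, 0, f0, f1, f2]])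
      (by ext a b; fin_cases a <;> fin_cases b <;> rfl)
      (by intro j' hj'; fin_cases j' <;> simp_all)]
  rw [expand_one _ 0 3 (Matrix.of ![![0, b1, 0, 0, b4, 0], ![c0, c1, 0, c6, c7, 0], ![d0, d1, d2, d6, d7, d8], ![0, 0, 0, 0, 1, 0], ![0, 0, 0, e0, e1, 0], ![0, 0, 0, f0, f1, f2]])
      (by ext a b; fin_cases a <;> fin_cases b <;> rfl)
      (by intro j' hj'; fin_cases j' <;> simp_all)]
  rw [expand_one _ 3 4 (Matrix.of ![![0, b1, 0, 0, 0], ![c0, c1, 0, c6, 0], ![d0, d1, d2, d6, d8], ![0, 0, 0, e0, 0], ![0, 0, 0, f0, f2]])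
      (by ext a b; fin_cases a <;> fin_cases b <;> rfl)
      (by intro j' hj'; fin_cases j' <;> simp_all)]
  rw [expand_one _ 3 3 (Matrix.of ![![0, b1, 0, 0], ![c0, c1, 0, 0], ![d0, d1, d2, d8], ![0, 0, 0, f2]])
      (by ext a b; fin_cases a <;> fin_cases b <;> rfl)
      (by intro j' hj'; fin_cases j' <;> simp_all)]
  rw [expand_one _ 3 3 (Matrix.of ![![0, b1, 0], ![c0, c1, 0], ![d0, d1, d2]])
      (by ext a b; fin_cases a <;> fin_cases b <;> rfl)
      (by intro j' hj'; fin_cases j' <;> simp_all)]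
  rw [Matrix.det_fin_three]
  norm_num [show ((0:Fin 4):ℕ) = 0 from rfl, show ((1:Fin 4):ℕ) = 1 from rfl, show ((2:Fin 4):ℕ) = 2 from rfl, show ((3:Fin 4):ℕ) = 3 from rfl, show ((0:Fin 5):ℕ) = 0 from rfl, show ((1:Fin 5):ℕ) = 1 from rfl, show ((2:Fin 5):ℕ) = 2 from rfl, show ((3:Fin 5):ℕ) = 3 from rfl, show ((4:Fin 5):ℕ) = 4 from rfl, show ((0:Fin 6):ℕ) = 0 from rfl, show ((1:Fin 6):ℕ) = 1 from rfl, show ((2:Fin 6):ℕ) = 2 from rfl, show ((3:Fin 6):ℕ) = 3 from rfl, show ((4:Fin 6):ℕ) = 4 from rfl, show ((0:Fin 7):ℕ) = 0 from rfl, show ((1:Fin 7):ℕ) = 1 from rfl, show ((2:Fin 7):ℕ) = 2 from rfl, show ((3:Fin 7):ℕ) = 3 from rfl, show ((4:Fin 7):ℕ) = 4 from rfl, show ((0:Fin 8):ℕ) = 0 from rfl, show ((1:Fin 8):ℕ) = 1 from rfl, show ((2:Fin 8):ℕ) = 2 from rfl, show ((3:Fin 8):ℕ) = 3 from rfl, show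 ((4:Fin 8):ℕ) = 4 from rfl, show ((0:Fin 9):ℕ) = 0 from rfl, show ((1:Fin 9):ℕ) = 1 from rfl, show ((2:Fin 9):ℕ) = 2 from rfl, show ((3:Fin 9):ℕ) = 3 from rfl, show ((4:Fin 9):ℕ) = 4 from rfl]
  ring
set_option maxHeartbeats 2000000 in
lemma jac_eq (a₁ a₂ a₃ b c ρ : ℝ) (p : R9) :
    jacM ![fun p => p 3,
                lieD (triadF a₁ a₂ a₃ b c ρ) (fun p => p 3),
                fun p => p 4,
                lieD (triadF a₁ a₂ a₃ b c ρ) (fun p => p 4),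
                lieD (triadF a₁ a₂ a₃ b c ρ)
                  (lieD (triadF a₁ a₂ a₃ b c ρ) (fun p => p 4)),
                lieD (triadF a₁ a₂ a₃ b c ρ) (lieD (triadF a₁ a₂ a₃ b c ρ)
                  (lieD (triadF a₁ a₂ a₃ b c ρ) (fun p => p 4))),
                fun p => p 7,
                lieD (triadF a₁ a₂ a₃ b c ρ) (fun p => p 7),
                lieD (triadF a₁ a₂ a₃ b c ρ)
                  (lieD (triadF a₁ a₂ a₃ b c ρ) (fun p => p 7))] p
    = Matrix.of ![![(0:ℝ),0,0,1,0,0,0,0,0],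
      ![0,0,0,0,-1,-1,0,0,0],
      ![0,0,0,0,1,0,0,0,0],
      ![0, ρ, 0, 1, (a₂ - 2*ρ), 0, 0, ρ, 0],
      ![ρ, ρ*(a₁+(a₂ - 2*ρ)), 0, (a₂ - 2*ρ), (a₂ - 2*ρ)^2-1, -1, ρ, ρ*(a₃+(a₂ - 2*ρ)), 0],
      ![ρ*(a₁+(a₂ - 2*ρ)), -ρ + ρ*(a₁+(a₂ - 2*ρ))*a₁ + ((a₂ - 2*ρ)^2-1)*ρ, -ρ, (a₂ - 2*ρ)^2-1 - p 5, -(a₂ - 2*ρ) + ((a₂ - 2*ρ)^2-1)*(a₂ - 2*ρ), -(a₂ - 2*ρ) + c - p 3, ρ*(a₃+(a₂ - 2*ρ)), ((a₂ - 2*ρ)^2-1)*ρ - ρ + ρ*(a₃+(a₂ - 2*ρ))*a₃, -ρ],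
      ![0,0,0,0,0,0,0,1,0],
      ![0,0,0,0,0,0,1,a₃,0],
      ![0,0,0,0,0,0,a₃,a₃^2-1,-1]] := by
  ext i j
  fin_cases i
  · show fderiv ℝ (fun p : R9 => p 3) p (Pi.single j 1) = _
    rw [(hpr 3 p).fderiv]
    fin_cases j <;> simp [pr, Pi.single_apply] <;> first | rfl | ring
  · show fderiv ℝ (lieD (triadF a₁ a₂ a₃ b c ρ) (fun p => p 3)) p (Pi.single j 1) = _
    rw [psi1_eq, (hg1 p).fderiv]
    fin_cases j <;> simp [pr, Pi.single_apply] <;> first | rfl | ring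
  · show fderiv ℝ (fun p : R9 => p 4) p (Pi.single j 1) = _
    rw [(hpr 4 p).fderiv]
    fin_cases j <;> simp [pr, Pi.single_apply] <;> first | rfl | ring
  · show fderiv ℝ (lieD (triadF a₁ a₂ a₃ b c ρ) (fun p => p 4)) p (Pi.single j 1) = _
    rw [psi3_eq, (hg3 a₂ ρ p).fderiv]
    fin_cases j <;> simp [pr, Pi.single_apply] <;> first | rfl | ring
  · show fderiv ℝ (lieD (triadF a₁ a₂ a₃ b c ρ) (lieD (triadF a₁ a₂ a₃ b c ρ) (fun p => p 4))) p (Pi.single j 1) = _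
    rw [psi4_eq, (hg4 a₁ a₂ a₃ ρ p).fderiv]
    fin_cases j <;> simp [pr, Pi.single_apply] <;> first | rfl | ring
  · show fderiv ℝ (lieD (triadF a₁ a₂ a₃ b c ρ) (lieD (triadF a₁ a₂ a₃ b c ρ) (lieD (triadF a₁ a₂ a₃ b c ρ) (fun p => p 4)))) p (Pi.single j 1) = _
    rw [psi5_eq, (hg5 a₁ a₂ a₃ b c ρ p).fderiv]
    fin_cases j <;> simp [pr, Pi.single_apply] <;> first | rfl | ring
  · show fderiv ℝ (fun p : R9 => p 7) p (Pi.single j 1) = _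
    rw [(hpr 7 p).fderiv]
    fin_cases j <;> simp [pr, Pi.single_apply] <;> first | rfl | ring
  · show fderiv ℝ (lieD (triadF a₁ a₂ a₃ b c ρ) (fun p => p 7)) p (Pi.single j 1) = _
    rw [psi7_eq, (hg7 a₃ p).fderiv]
    fin_cases j <;> simp [pr, Pi.single_apply] <;> first | rfl | ring
  · show fderiv ℝ (lieD (triadF a₁ a₂ a₃ b c ρ) (lieD (triadF a₁ a₂ a₃ b c ρ) (fun p => p 7))) p (Pi.single j 1) = _
    rw [psi8_eq, (hg8 a₃ p).fderiv]
    fin_cases j <;> simp [pr, Pi.single_apply] <;> first | rfl | ring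

/-- Measuring (x₂, y₂, y₃): the map to (x₂, ẋ₂, y₂, ẏ₂, ÿ₂, y⃛₂, y₃, ẏ₃, ÿ₃)
has Jacobian determinant equal to a nonzero constant multiple of a power of ρ,
hence nonvanishing everywhere when ρ ≠ 0: global observability of the triad. -/
theorem triad_obs (a₁ a₂ a₃ b c ρ : ℝ) :
    ∃ (C : ℝ) (k : ℕ), C ≠ 0 ∧
      (∀ p : Fin 9 → ℝ,
        (jacM ![fun p => p 3,
                lieD (triadF a₁ a₂ a₃ b c ρ) (fun p => p 3),
                fun p => p 4,
                lieD (triadF a₁ a₂ a₃ b c ρ) (fun p => p 4),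
                lieD (triadF a₁ a₂ a₃ b c ρ)
                  (lieD (triadF a₁ a₂ a₃ b c ρ) (fun p => p 4)),
                lieD (triadF a₁ a₂ a₃ b c ρ) (lieD (triadF a₁ a₂ a₃ b c ρ)
                  (lieD (triadF a₁ a₂ a₃ b c ρ) (fun p => p 4))),
                fun p => p 7,
                lieD (triadF a₁ a₂ a₃ b c ρ) (fun p => p 7),
                lieD (triadF a₁ a₂ a₃ b c ρ)
                  (lieD (triadF a₁ a₂ a₃ b c ρ) (fun p => p 7))] p).det
          = C * ρ ^ k) ∧
      (ρ ≠ 0 →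
        ∀ p : Fin 9 → ℝ,
          (jacM ![fun p => p 3,
                lieD (triadF a₁ a₂ a₃ b c ρ) (fun p => p 3),
                fun p => p 4,
                lieD (triadF a₁ a₂ a₃ b c ρ) (fun p => p 4),
                lieD (triadF a₁ a₂ a₃ b c ρ)
                  (lieD (triadF a₁ a₂ a₃ b c ρ) (fun p => p 4)),
                lieD (triadF a₁ a₂ a₃ b c ρ) (lieD (triadF a₁ a₂ a₃ b c ρ)
                  (lieD (triadF a₁ a₂ a₃ b c ρ) (fun p => p 4))),
                fun p => p 7,
                lieD (triadF a₁ a₂ a₃ b c ρ) (fun p => p 7),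
                lieD (triadF a₁ a₂ a₃ b c ρ)
                  (lieD (triadF a₁ a₂ a₃ b c ρ) (fun p => p 7))] p).det ≠ 0) := by
  have key : ∀ p : Fin 9 → ℝ,
      (jacM ![fun p => p 3,
                lieD (triadF a₁ a₂ a₃ b c ρ) (fun p => p 3),
                fun p => p 4,
                lieD (triadF a₁ a₂ a₃ b c ρ) (fun p => p 4),
                lieD (triadF a₁ a₂ a₃ b c ρ)
                  (lieD (triadF a₁ a₂ a₃ b c ρ) (fun p => p 4)),
                lieD (triadF a₁ a₂ a₃ b c ρ) (lieD (triadF a₁ a₂ a₃ b c ρ)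
                  (lieD (triadF a₁ a₂ a₃ b c ρ) (fun p => p 4))),
                fun p => p 7,
                lieD (triadF a₁ a₂ a₃ b c ρ) (fun p => p 7),
                lieD (triadF a₁ a₂ a₃ b c ρ)
                  (lieD (triadF a₁ a₂ a₃ b c ρ) (fun p => p 7))] p).det
        = -1 * ρ ^ 3 := by
    intro p
    rw [jac_eq, det9]
    ring
  exact ⟨-1, 3, by norm_num, key, fun hρ p => by
    rw [key p]; exact mul_ne_zero (by norm_num) (pow_ne_zero _ hρ)⟩
end
end
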